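/- arXiv:1712.05448 — 6 statements merged into one kernel-verified Lean document; each statement's English description precedes it below -/
import Mathlib

section
/- Let G be a finite group with subgroups U and V. Then U and V are almost conjugate in G if and only if for every g ∈ G, the number of fixed cosets of g acting by left translation on G/U equals the number of fixed cosets of g acting on G/V. -/
section Aux

variable {G : Type*} [Group G]

private lemma acf_fix_iff (U : Subgroup G) (g a : G) :
    (g • (a : G ⧸ U) = a) ↔ a⁻¹ * g * a ∈ U := by
  rw [MulAction.Quotient.smul_mk, QuotientGroup.eq]
  constructor
  · intro h
    have := U.inv_mem h
    simpa [mul_assoc] using this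
  · intro h
    have := U.inv_mem h
    simpa [mul_assoc] using this

/-- Card of a sigma type over a fintype with finite fibers. -/
private lemma acf_card_sigma {ι : Type*} [Fintype ι] (f : ι → Type*) [∀ i, Finite (f i)] :
    Nat.card (Σ i, f i) = ∑ i, Nat.card (f i) := by
  classical
  letI : ∀ i, Fintype (f i) := fun i => Fintype.ofFinite (f i)
  simp [Nat.card_eq_fintype_card, Fintype.card_sigma]

private lemma acf_card_eq_sum_fibers {α β : Type*} [Finite α] [Fintype β] (f : α → β) :
    Nat.card α = ∑ b : β, Nat.card {a // f a = b} := by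
  rw [← Nat.card_congr (Equiv.sigmaFiberEquiv f), acf_card_sigma]

/-- Key identity 1: the set of `a : G` conjugating `g` into `U` has cardinality
`(fixed cosets) * |U|`. -/
private lemma acf_key1 [Finite G] (U : Subgroup G) (g : G) :
    Nat.card {a : G // a⁻¹ * g * a ∈ U} =
      Nat.card {q : G ⧸ U // g • q = q} * Nat.card U := by
  have e : {a : G // a⁻¹ * g * a ∈ U} ≃ {q : G ⧸ U // g • q = q} × U :=
    { toFun := fun a =>
        (⟨(a.1 : G ⧸ U), (acf_fix_iff U g a.1).2 a.2⟩,
         ⟨(Quotient.out (a.1 : G ⧸ U))⁻¹ * a.1, by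
            rw [← QuotientGroup.eq, QuotientGroup.out_eq']⟩)
      invFun := fun p =>
        ⟨Quotient.out p.1.1 * p.2.1, by
          refine (acf_fix_iff U g _).1 ?_
          have h1 : ((Quotient.out p.1.1 * p.2.1 : G) : G ⧸ U) = p.1.1 := by
            rw [QuotientGroup.mk_mul_of_mem _ p.2.2, QuotientGroup.out_eq']
          rw [h1]; exact p.1.2⟩
      left_inv := fun a => by
        ext
        simp
      right_inv := fun p => by
        have h1 : ((Quotient.out p.1.1 * p.2.1 : G) : G ⧸ U) = p.1.1 := by
          rw [QuotientGroup.mk_mul_of_mem _ p.2.2, QuotientGroup.out_eq']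
        refine Prod.ext (Subtype.ext h1) (Subtype.ext ?_)
        show (Quotient.out ((Quotient.out p.1.1 * p.2.1 : G) : G ⧸ U))⁻¹ *
          (Quotient.out p.1.1 * p.2.1) = p.2.1
        rw [h1, inv_mul_cancel_left] }
  rw [Nat.card_congr e, Nat.card_prod]

/-- Key identity 2: the same set has cardinality `|g^G ∩ U| * |C_G(g)|`. -/
private lemma acf_key2 [Finite G] (U : Subgroup G) (g : G) :
    Nat.card {a : G // a⁻¹ * g * a ∈ U} =
      Set.ncard {x : G | IsConj g x ∧ x ∈ U} *
        Nat.card (Subgroup.centralizer ({g} : Set G)) := by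
  classical
  set T := {x : G | IsConj g x ∧ x ∈ U} with hT
  have hchoice : ∀ x : T, ∃ a : G, a⁻¹ * g * a = (x : G) := by
    rintro ⟨x, hx, -⟩
    obtain ⟨c, hc⟩ := isConj_iff.1 hx
    exact ⟨c⁻¹, by simpa using hc⟩
  choose w hw using hchoice
  have e : {a : G // a⁻¹ * g * a ∈ U} ≃ T × Subgroup.centralizer ({g} : Set G) :=
    { toFun := fun a =>
        let x : T := ⟨a.1⁻¹ * g * a.1, ⟨isConj_iff.2 ⟨a.1⁻¹, by group⟩, a.2⟩⟩
        (x, ⟨a.1 * (w x)⁻¹, by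
          rw [Subgroup.mem_centralizer_singleton_iff]
          have hwx : (w x)⁻¹ * g * (w x) = a.1⁻¹ * g * a.1 := hw x
          have this1 : g * ((w x) * a.1⁻¹) = ((w x) * a.1⁻¹) * g := by
            calc g * ((w x) * a.1⁻¹) = (w x) * ((w x)⁻¹ * g * (w x)) * a.1⁻¹ := by group
              _ = (w x) * (a.1⁻¹ * g * a.1) * a.1⁻¹ := by rw [hwx]
              _ = ((w x) * a.1⁻¹) * g := by group
          have hc : Commute g ((w x) * a.1⁻¹) := this1
          have hc2 : Commute g (a.1 * (w x)⁻¹) := by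
            simpa [mul_inv_rev] using hc.inv_right
          exact hc2.symm.eq⟩)
      invFun := fun p =>
        ⟨p.2.1 * w p.1, by
          have : (p.2.1 * w p.1)⁻¹ * g * (p.2.1 * w p.1) = (p.1 : G) := by
            have h2 : g * p.2.1 = p.2.1 * g :=
              (Subgroup.mem_centralizer_singleton_iff.1 p.2.2).symm
            calc (p.2.1 * w p.1)⁻¹ * g * (p.2.1 * w p.1)
                = (w p.1)⁻¹ * (p.2.1⁻¹ * (g * p.2.1)) * w p.1 := by group
              _ = (w p.1)⁻¹ * (p.2.1⁻¹ * (p.2.1 * g)) * w p.1 := by rw [h2]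
              _ = (w p.1)⁻¹ * g * w p.1 := by group
              _ = (p.1 : G) := hw p.1
          rw [this]; exact p.1.2.2⟩
      left_inv := fun a => by
        ext
        show (a.1 * (w _)⁻¹) * w _ = a.1
        rw [inv_mul_cancel_right]
      right_inv := fun p => by
        have key : (p.2.1 * w p.1)⁻¹ * g * (p.2.1 * w p.1) = (p.1 : G) := by
          have h2 : g * p.2.1 = p.2.1 * g :=
            (Subgroup.mem_centralizer_singleton_iff.1 p.2.2).symm
          calc (p.2.1 * w p.1)⁻¹ * g * (p.2.1 * w p.1)
              = (w p.1)⁻¹ * (p.2.1⁻¹ * (g * p.2.1)) * w p.1 := by group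
            _ = (w p.1)⁻¹ * (p.2.1⁻¹ * (p.2.1 * g)) * w p.1 := by rw [h2]
            _ = (w p.1)⁻¹ * g * w p.1 := by group
            _ = (p.1 : G) := hw p.1
        have hx : (⟨(p.2.1 * w p.1)⁻¹ * g * (p.2.1 * w p.1),
            ⟨isConj_iff.2 ⟨(p.2.1 * w p.1)⁻¹, by group⟩,
              by rw [key]; exact p.1.2.2⟩⟩ : T) = p.1 := Subtype.ext key
        refine Prod.ext hx (Subtype.ext ?_)
        show (p.2.1 * w p.1) * (w _)⁻¹ = p.2.1
        rw [hx, mul_inv_cancel_right] }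
  rw [Nat.card_congr e, Nat.card_prod, Nat.card_coe_set_eq]

/-- If all conjugacy-class intersection counts agree, then `|U| = |V|`. -/
private lemma acf_card_eq [Finite G] (U V : Subgroup G)
    (h : ∀ g : G, Set.ncard {x : G | IsConj g x ∧ x ∈ U} =
        Set.ncard {x : G | IsConj g x ∧ x ∈ V}) :
    Nat.card U = Nat.card V := by
  classical
  letI : Fintype G := Fintype.ofFinite G
  letI : Fintype (ConjClasses G) := Fintype.ofFinite _
  have fib : ∀ (W : Subgroup G) (c : ConjClasses G),
      Nat.card {x : W // ConjClasses.mk (x : G) = c} =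
        Set.ncard {x : G | IsConj (Quotient.out c) x ∧ x ∈ W} := by
    intro W c
    rw [← Nat.card_coe_set_eq]
    refine Nat.card_congr ?_
    have hout : ConjClasses.mk (Quotient.out c) = c := by
      rw [← ConjClasses.quotient_mk_eq_mk]; exact Quotient.out_eq (s := IsConj.setoid G) c
    refine
      { toFun := fun x => ⟨(x.1 : G), ?_, x.1.2⟩
        invFun := fun x => ⟨⟨x.1, x.2.2⟩, ?_⟩
        left_inv := fun x => rfl
        right_inv := fun x => rfl }
    · exact ConjClasses.mk_eq_mk_iff_isConj.1 (hout.trans x.2.symm)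
    · exact (ConjClasses.mk_eq_mk_iff_isConj.2 x.2.1.symm).trans hout
  have hU := acf_card_eq_sum_fibers (fun x : U => ConjClasses.mk (x : G))
  have hV := acf_card_eq_sum_fibers (fun x : V => ConjClasses.mk (x : G))
  rw [hU, hV]
  refine Finset.sum_congr rfl fun c _ => ?_
  rw [fib U c, fib V c, h (Quotient.out c)]

end Aux

/-- `U` and `V` are almost conjugate in the finite group `G` iff every `g ∈ G`
fixes the same number of cosets in `G/U` as in `G/V` (left translation action). -/
theorem almostConjugate_iff_fixedCosets {G : Type*} [Group G] [Finite G]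
    (U V : Subgroup G) :
    (∀ g : G, Set.ncard {x : G | IsConj g x ∧ x ∈ U} =
        Set.ncard {x : G | IsConj g x ∧ x ∈ V}) ↔
      (∀ g : G, Nat.card {a : G ⧸ U // g • a = a} =
        Nat.card {a : G ⧸ V // g • a = a}) := by
  have hU : ∀ g : G, Nat.card {q : G ⧸ U // g • q = q} * Nat.card U =
      Set.ncard {x : G | IsConj g x ∧ x ∈ U} *
        Nat.card (Subgroup.centralizer ({g} : Set G)) := fun g => by
    rw [← acf_key1 U g, acf_key2 U g]
  have hV : ∀ g : G, Nat.card {q : G ⧸ V // g • q = q} * Nat.card V =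
      Set.ncard {x : G | IsConj g x ∧ x ∈ V} *
        Nat.card (Subgroup.centralizer ({g} : Set G)) := fun g => by
    rw [← acf_key1 V g, acf_key2 V g]
  have hUpos : 0 < Nat.card U := Nat.card_pos
  have hVpos : 0 < Nat.card V := Nat.card_pos
  constructor
  · intro h g
    have hcard : Nat.card U = Nat.card V := acf_card_eq U V h
    have e1 := hU g
    have e2 := hV g
    rw [h g, ← e2, hcard] at e1
    exact Nat.eq_of_mul_eq_mul_right hVpos e1
  · intro h g
    have hcard : Nat.card U = Nat.card V := by
      have h1 := h 1
      have hfixU : Nat.card {q : G ⧸ U // (1 : G) • q = q} = Nat.card (G ⧸ U) :=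
        Nat.card_congr (Equiv.subtypeUnivEquiv fun q => one_smul G q)
      have hfixV : Nat.card {q : G ⧸ V // (1 : G) • q = q} = Nat.card (G ⧸ V) :=
        Nat.card_congr (Equiv.subtypeUnivEquiv fun q => one_smul G q)
      have hGU := Subgroup.card_eq_card_quotient_mul_card_subgroup U
      have hGV := Subgroup.card_eq_card_quotient_mul_card_subgroup V
      rw [hfixU, hfixV] at h1
      have : Nat.card (G ⧸ U) * Nat.card U = Nat.card (G ⧸ U) * Nat.card V := by
        rw [← hGU, h1, ← hGV]
      have hqpos : 0 < Nat.card (G ⧸ U) := Nat.card_pos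
      exact Nat.eq_of_mul_eq_mul_left hqpos this
    have hCpos : 0 < Nat.card (Subgroup.centralizer ({g} : Set G)) := Nat.card_pos
    have e1 := hU g
    have e2 := hV g
    rw [h g, hcard, e2] at e1
    exact (Nat.eq_of_mul_eq_mul_right hCpos e1).symm
end

section
/- Let Γ be a finite point-line geometry with equally many points and lines, whose incidence matrix A is invertible over ℚ. Then every automorphism of Γ fixes exactly as many points as lines. -/
open scoped Classical

/-- If a finite point-line geometry with equally many points and lines has an
incidence matrix invertible over `ℚ`, then every automorphism fixes exactly as
many points as lines. -/
theorem fixed_points_eq_fixed_lines_of_invertible {n : ℕ}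
    (I : Fin n → Fin n → Prop)
    (hA : IsUnit (Matrix.of fun i j : Fin n => if I i j then (1 : ℚ) else 0))
    (e f : Equiv.Perm (Fin n))
    (hauto : ∀ (x Y : Fin n), I x Y ↔ I (e x) (f Y)) :
    Nat.card {x : Fin n // e x = x} = Nat.card {Y : Fin n // f Y = Y} := by
  set A : Matrix (Fin n) (Fin n) ℚ :=
    Matrix.of fun i j : Fin n => if I i j then (1 : ℚ) else 0 with hAdef
  obtain ⟨u, hu⟩ := hA
  have key : e.permMatrix ℚ * A = A * f.permMatrix ℚ := by
    rw [Equiv.Perm.permMatrix, Equiv.Perm.permMatrix, PEquiv.toMatrix_toPEquiv_mul,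
      PEquiv.mul_toMatrix_toPEquiv]
    ext i j
    simp only [Matrix.submatrix_apply, id, hAdef, Matrix.of_apply]
    have := hauto i (f.symm j)
    rw [Equiv.apply_symm_apply] at this
    by_cases h : I i (f.symm j)
    · rw [if_pos (this.mp h), if_pos h]
    · rw [if_neg (fun hh => h (this.mpr hh)), if_neg h]
  have htr : Matrix.trace (e.permMatrix ℚ) = Matrix.trace (f.permMatrix ℚ) := by
    have hP : e.permMatrix ℚ = A * f.permMatrix ℚ * (↑u⁻¹ : Matrix (Fin n) (Fin n) ℚ) := by
      rw [← key]
      rw [Matrix.mul_assoc]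
      rw [show A * (↑u⁻¹ : Matrix (Fin n) (Fin n) ℚ) = 1 by
        rw [← hu]; exact u.mul_inv]
      rw [Matrix.mul_one]
    rw [hP, Matrix.trace_mul_cycle]
    rw [show (↑u⁻¹ : Matrix (Fin n) (Fin n) ℚ) * A = 1 by rw [← hu]; exact u.inv_mul]
    rw [Matrix.one_mul]
  rw [Matrix.trace_permutation, Matrix.trace_permutation] at htr
  have : (Function.fixedPoints ⇑e).ncard = (Function.fixedPoints ⇑f).ncard :=
    Nat.cast_injective htr
  have h1 : Nat.card {x : Fin n // e x = x} = (Function.fixedPoints ⇑e).ncard := by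
    rw [← Nat.card_coe_set_eq]; rfl
  have h2 : Nat.card {Y : Fin n // f Y = Y} = (Function.fixedPoints ⇑f).ncard := by
    rw [← Nat.card_coe_set_eq]; rfl
  rw [h1, h2, this]
end

section
/- Let Γ be a symmetric 2-(v,k,λ) design with v > k > λ, let A be a point-transitive automorphism group of Γ, let x be a point and L a block. Then (A, A_x, A_L) is a strong Gassmann–Sunada triple, i.e., A_x and A_L are almost conjugate in A: |a^A ∩ A_x| = |a^A ∩ A_L| for all a ∈ A. -/
open MulAction Matrix

private lemma sum_ite_ncard {β : Type*} [Fintype β] (q : β → Prop) [DecidablePred q] :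
    (∑ b, if q b then (1 : ℚ) else 0) = ({b | q b}.ncard : ℚ) := by
  simp [Finset.sum_boole, Set.ncard_eq_toFinset_card', Set.toFinset_setOf]

/-- If all fibers of `f` have the same cardinality `n`, then `|S| = |T| * n`. -/
private lemma card_eq_card_mul_of_fibers {S T : Type*} [Finite S] [Finite T] (f : S → T) (n : ℕ)
    (h : ∀ t : T, Nat.card {s : S // f s = t} = n) : Nat.card S = Nat.card T * n := by
  classical
  cases nonempty_fintype S
  cases nonempty_fintype T
  rw [Nat.card_congr (Equiv.sigmaFiberEquiv f).symm]
  rw [Nat.card_eq_fintype_card, Fintype.card_sigma, Nat.card_eq_fintype_card]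
  have h' : ∀ t : T, Fintype.card {s : S // f s = t} = n := by
    intro t; rw [← Nat.card_eq_fintype_card]; exact h t
  simp [h', Finset.sum_const, mul_comm]

/-- Fixed-point counting formula for a transitive action:
`|a^A ∩ A_x| * |C_A(a)| = |Fix(a)| * |A_x|`. -/
private lemma conj_count {A : Type*} [Group A] [Finite A] (X : Type*) [Finite X] [MulAction A X]
    [MulAction.IsPretransitive A X] (x : X) (a : A) :
    Set.ncard {c : A | IsConj a c ∧ c ∈ MulAction.stabilizer A x} *
      Nat.card (Subgroup.centralizer ({a} : Set A)) =
    Nat.card (MulAction.fixedBy X a) * Nat.card (MulAction.stabilizer A x) := by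
  classical
  have key : ∀ g : A, (g⁻¹ * a * g ∈ stabilizer A x) ↔ a • (g • x) = g • x := by
    intro g
    rw [mem_stabilizer_iff, mul_smul, mul_smul, inv_smul_eq_iff]
  -- the set S of group elements g with a • (g • x) = g • x
  set S := {g : A // a • (g • x) = g • x} with hS
  -- first count : fibers of g ↦ g • x
  have f1mem : ∀ g : S, g.1 • x ∈ fixedBy X a := fun g => g.2
  let f1 : S → fixedBy X a := fun g => ⟨g.1 • x, g.2⟩
  have hcard1 : Nat.card S = Nat.card (fixedBy X a) * Nat.card (stabilizer A x) := by
    apply card_eq_card_mul_of_fibers f1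
    intro y
    obtain ⟨g₀, hg₀⟩ := MulAction.exists_smul_eq A x y.1
    apply Nat.card_congr
    refine ⟨fun s => ⟨g₀⁻¹ * s.1.1, ?_⟩, fun h => ⟨⟨g₀ * h.1, ?_⟩, ?_⟩, ?_, ?_⟩
    · have hfib : s.1.1 • x = y.1 := congrArg Subtype.val s.2
      rw [mem_stabilizer_iff, mul_smul, hfib, ← hg₀, inv_smul_smul]
    · have h1 : (g₀ * h.1) • x = y.1 := by
        rw [mul_smul, h.2, hg₀]
      rw [h1]; exact y.2
    · apply Subtype.ext
      show (g₀ * h.1) • x = y.1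
      rw [mul_smul, h.2, hg₀]
    · intro s
      apply Subtype.ext; apply Subtype.ext
      show g₀ * (g₀⁻¹ * s.1.1) = s.1.1
      group
    · intro h
      apply Subtype.ext
      show g₀⁻¹ * (g₀ * h.1) = h.1
      group
  -- second count : fibers of g ↦ g⁻¹ * a * g
  let f2 : S → {c : A // IsConj a c ∧ c ∈ stabilizer A x} := fun g =>
    ⟨g.1⁻¹ * a * g.1, ⟨isConj_iff.mpr ⟨g.1⁻¹, by group⟩, (key g.1).mpr g.2⟩⟩
  have hcard2 : Nat.card S =
      Nat.card {c : A // IsConj a c ∧ c ∈ stabilizer A x} *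
        Nat.card (Subgroup.centralizer ({a} : Set A)) := by
    apply card_eq_card_mul_of_fibers f2
    intro c
    obtain ⟨u, hu⟩ := isConj_iff.mp c.2.1
    have hg₀ : u⁻¹⁻¹ * a * u⁻¹ = c.1 := by rw [inv_inv]; exact hu
    set g₀ := u⁻¹ with hg₀def
    apply Nat.card_congr
    refine ⟨fun s => ⟨s.1.1 * g₀⁻¹, ?_⟩, fun h => ⟨⟨h.1 * g₀, ?_⟩, ?_⟩, ?_, ?_⟩
    · have hfib : s.1.1⁻¹ * a * s.1.1 = c.1 := congrArg Subtype.val s.2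
      have hcomm : a * (s.1.1 * g₀⁻¹) = (s.1.1 * g₀⁻¹) * a := by
        have h1 : s.1.1 * (s.1.1⁻¹ * a * s.1.1) * g₀⁻¹ = s.1.1 * (g₀⁻¹ * a * g₀) * g₀⁻¹ := by
          rw [hfib, hg₀]
        calc a * (s.1.1 * g₀⁻¹) = s.1.1 * (s.1.1⁻¹ * a * s.1.1) * g₀⁻¹ := by group
          _ = s.1.1 * (g₀⁻¹ * a * g₀) * g₀⁻¹ := h1
          _ = (s.1.1 * g₀⁻¹) * a := by group
      rw [Subgroup.mem_centralizer_iff]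
      intro b hb
      rw [Set.mem_singleton_iff] at hb
      rw [hb, hcomm]
    · have hc : a * h.1 = h.1 * a := Subgroup.mem_centralizer_iff.mp h.2 a rfl
      have hkey : h.1⁻¹ * a * h.1 = a := by rw [mul_assoc, hc]; group
      have h1 : (h.1 * g₀)⁻¹ * a * (h.1 * g₀) = c.1 := by
        have h2 : (h.1 * g₀)⁻¹ * a * (h.1 * g₀) = g₀⁻¹ * (h.1⁻¹ * a * h.1) * g₀ := by group
        rw [h2, hkey, hg₀]
      exact (key _).mp (by rw [h1]; exact c.2.2)
    · apply Subtype.ext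
      show (h.1 * g₀)⁻¹ * a * (h.1 * g₀) = c.1
      have hc : a * h.1 = h.1 * a := Subgroup.mem_centralizer_iff.mp h.2 a rfl
      have hkey : h.1⁻¹ * a * h.1 = a := by rw [mul_assoc, hc]; group
      have h2 : (h.1 * g₀)⁻¹ * a * (h.1 * g₀) = g₀⁻¹ * (h.1⁻¹ * a * h.1) * g₀ := by group
      rw [h2, hkey, hg₀]
    · intro s
      apply Subtype.ext; apply Subtype.ext
      show s.1.1 * g₀⁻¹ * g₀ = s.1.1
      group
    · intro h
      apply Subtype.ext
      show h.1 * g₀ * g₀⁻¹ = h.1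
      group
  rw [← Nat.card_coe_set_eq]
  have hcoe : Nat.card ↥{c : A | IsConj a c ∧ c ∈ stabilizer A x} =
      Nat.card {c : A // IsConj a c ∧ c ∈ stabilizer A x} := rfl
  rw [hcoe, ← hcard2, hcard1]

/-- Fixed-point theorem for symmetric designs: every automorphism fixes equally
many points and blocks. -/
private lemma fix_card_eq {P B : Type*} [Fintype P] [Fintype B] (I : P → B → Prop)
    (v k l : ℕ) (hkl : k > l)
    (hvP : Nat.card P = v) (hvB : Nat.card B = v)
    (hpoint : ∀ p : P, Set.ncard {b : B | I p b} = k)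
    (hpts : ∀ p p' : P, p ≠ p' → Set.ncard {b : B | I p b ∧ I p' b} = l)
    {A : Type*} [Group A] [MulAction A P] [MulAction A B]
    (hAauto : ∀ (a : A) (p : P) (b : B), I p b ↔ I (a • p) (a • b))
    (a : A) : Nat.card (MulAction.fixedBy P a) = Nat.card (MulAction.fixedBy B a) := by
  classical
  -- the incidence matrix
  set N : Matrix P B ℚ := Matrix.of fun p b => if I p b then 1 else 0 with hN
  -- counting sums
  set J : Matrix P P ℚ := Matrix.of fun _ _ => (1 : ℚ) with hJ
  have hcardP : (Fintype.card P : ℚ) = (v : ℚ) := by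
    rw [← Nat.card_eq_fintype_card, hvP]
  have hJJ : J * J = (v : ℚ) • J := by
    ext p p'
    simp only [Matrix.mul_apply, hJ, Matrix.of_apply, Matrix.smul_apply, smul_eq_mul, mul_one,
      Finset.sum_const, Finset.card_univ, nsmul_eq_mul]
    rw [hcardP]
  have hG : N * Nᵀ = ((k : ℚ) - l) • (1 : Matrix P P ℚ) + (l : ℚ) • J := by
    ext p p'
    have hterm : ∀ b, N p b * Nᵀ b p' = if I p b ∧ I p' b then (1 : ℚ) else 0 := by
      intro b
      simp only [hN, Matrix.transpose_apply, Matrix.of_apply]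
      by_cases h1 : I p b <;> by_cases h2 : I p' b <;> simp [h1, h2]
    rw [Matrix.mul_apply, Finset.sum_congr rfl fun b _ => hterm b, sum_ite_ncard]
    simp only [Matrix.add_apply, Matrix.smul_apply, Matrix.one_apply, hJ, Matrix.of_apply,
      smul_eq_mul, mul_one]
    by_cases h : p = p'
    · subst h
      have : {b | I p b ∧ I p b} = {b | I p b} := by ext b; simp
      rw [this, hpoint p, if_pos rfl]
      ring
    · rw [hpts p p' h, if_neg h]
      ring
  -- invertibility of N * Nᵀ
  have ha0 : (0 : ℚ) < (k : ℚ) - l := by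
    have : (l : ℚ) < k := by exact_mod_cast hkl
    linarith
  have hb0 : (0 : ℚ) < ((k : ℚ) - l) + v * l := by
    have h1 : (0 : ℚ) ≤ (v : ℚ) * l := by positivity
    linarith
  set c : ℚ := ((k : ℚ) - l)⁻¹ with hc
  set d : ℚ := -(l : ℚ) / (((k : ℚ) - l) * (((k : ℚ) - l) + v * l)) with hd
  have hGinv : (N * Nᵀ) * (c • (1 : Matrix P P ℚ) + d • J) = 1 := by
    have hcoef1 : ((k : ℚ) - l) * c = 1 := by
      rw [hc, mul_inv_cancel₀ ha0.ne']
    have hcoef2 : ((k : ℚ) - l) * d + ((l : ℚ) * c + (l : ℚ) * ((v : ℚ) * d)) = 0 := by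
      rw [hc, hd]
      have h1 : ((k : ℚ) - l) ≠ 0 := ha0.ne'
      have h2 : ((k : ℚ) - l) + v * l ≠ 0 := hb0.ne'
      field_simp
      ring
    rw [hG]
    simp only [Matrix.add_mul, Matrix.mul_add, Matrix.smul_mul, Matrix.mul_smul, one_mul,
      mul_one, hJJ]
    trans ((((k : ℚ) - l) * c) • (1 : Matrix P P ℚ) +
      ((((k : ℚ) - l) * d) + ((l : ℚ) * c + (l : ℚ) * ((v : ℚ) * d))) • J)
    · module
    · rw [hcoef1, hcoef2, one_smul, zero_smul, add_zero]
  have hdetG : IsUnit (N * Nᵀ).det := Matrix.isUnit_det_of_right_inverse hGinv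
  -- reindex to a square matrix
  have hcards : Fintype.card B = Fintype.card P := by
    rw [← Nat.card_eq_fintype_card, ← Nat.card_eq_fintype_card, hvB, hvP]
  let e : B ≃ P := Fintype.equivOfCardEq hcards
  set M : Matrix B B ℚ := Matrix.of fun b b' => N (e b) b' with hM
  have hMMt : M * Mᵀ = (N * Nᵀ).submatrix e e := by
    ext b b'
    simp only [Matrix.mul_apply, Matrix.transpose_apply, Matrix.submatrix_apply, hM,
      Matrix.of_apply]
  have hMdet : IsUnit M.det := by
    have h1 : IsUnit ((N * Nᵀ).submatrix (⇑e) (⇑e)).det := by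
      rw [Matrix.det_submatrix_equiv_self]; exact hdetG
    rw [← hMMt, Matrix.det_mul, Matrix.det_transpose] at h1
    exact isUnit_of_mul_isUnit_left h1
  -- permutation matrices
  set Pm : Matrix P P ℚ := Matrix.of fun p q => if a • q = p then 1 else 0 with hPm
  set Qm : Matrix B B ℚ := Matrix.of fun c' b => if a • b = c' then 1 else 0 with hQm
  have hPN : Pm * N = N * Qm := by
    ext p b
    have hL : (Pm * N) p b = N (a⁻¹ • p) b := by
      rw [Matrix.mul_apply]
      have : ∀ q, Pm p q * N q b = if q = a⁻¹ • p then N q b else 0 := by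
        intro q
        simp only [hPm, Matrix.of_apply, smul_eq_iff_eq_inv_smul]
        by_cases h : q = a⁻¹ • p <;> simp [h]
      rw [Finset.sum_congr rfl fun q _ => this q, Finset.sum_ite_eq' Finset.univ]
      simp
    have hR : (N * Qm) p b = N p (a • b) := by
      rw [Matrix.mul_apply]
      have : ∀ c', N p c' * Qm c' b = if c' = a • b then N p c' else 0 := by
        intro c'
        simp only [hQm, Matrix.of_apply, eq_comm (a := a • b)]
        by_cases h : c' = a • b <;> simp [h]
      rw [Finset.sum_congr rfl fun c' _ => this c', Finset.sum_ite_eq' Finset.univ]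
      simp
    rw [hL, hR]
    have hiff : I (a⁻¹ • p) b ↔ I p (a • b) := by
      have := hAauto a (a⁻¹ • p) b
      rwa [smul_inv_smul] at this
    simp only [hN, Matrix.of_apply]
    by_cases h : I p (a • b)
    · rw [if_pos (hiff.mpr h), if_pos h]
    · rw [if_neg (fun hh => h (hiff.mp hh)), if_neg h]
  have hPM : Pm.submatrix e e * M = M * Qm := by
    ext b b''
    have hL : (Pm.submatrix e e * M) b b'' = (Pm * N) (e b) b'' := by
      rw [Matrix.mul_apply, Matrix.mul_apply]
      exact Equiv.sum_comp e (fun q => Pm (e b) q * N q b'')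
    have hR : (M * Qm) b b'' = (N * Qm) (e b) b'' := by
      rw [Matrix.mul_apply, Matrix.mul_apply]
      rfl
    rw [hL, hR, hPN]
  -- trace computation
  have htr : Qm.trace = Pm.trace := by
    have hQ : Qm = M⁻¹ * (Pm.submatrix e e * M) := by
      rw [hPM, ← Matrix.mul_assoc, Matrix.nonsing_inv_mul _ hMdet, one_mul]
    rw [hQ, Matrix.trace_mul_comm, Matrix.mul_assoc, Matrix.mul_nonsing_inv _ hMdet,
      Matrix.mul_one]
    show ∑ b, Pm (e b) (e b) = ∑ p, Pm p p
    exact Equiv.sum_comp e (fun p => Pm p p)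
  have htrP : Pm.trace = (Nat.card (MulAction.fixedBy P a) : ℚ) := by
    show (∑ p, Pm p p) = _
    have : ∀ p, Pm p p = if a • p = p then (1 : ℚ) else 0 := fun p => rfl
    rw [Finset.sum_congr rfl fun p _ => this p, sum_ite_ncard]
    rw [Nat.card_coe_set_eq]
    rfl
  have htrQ : Qm.trace = (Nat.card (MulAction.fixedBy B a) : ℚ) := by
    show (∑ b, Qm b b) = _
    have : ∀ b, Qm b b = if a • b = b then (1 : ℚ) else 0 := fun b => rfl
    rw [Finset.sum_congr rfl fun b _ => this b, sum_ite_ncard]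
    rw [Nat.card_coe_set_eq]
    rfl
  have := htr
  rw [htrP, htrQ] at this
  exact_mod_cast this.symm

/-- For a point-transitive automorphism group `A` of a symmetric 2-(v,k,λ)
design with v > k > λ, a point `x` and a block `L`, the triple `(A, A_x, A_L)`
is a strong Gassmann–Sunada triple: `A_x` and `A_L` are almost conjugate. -/
theorem symmetric_design_strong_gassmann_sunada
    {P B : Type*} [Fintype P] [Fintype B] (I : P → B → Prop)
    (v k l : ℕ) (hvk : v > k) (hkl : k > l)
    (hvP : Nat.card P = v) (hvB : Nat.card B = v)
    (hblock : ∀ b : B, Set.ncard {p : P | I p b} = k)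
    (hpoint : ∀ p : P, Set.ncard {b : B | I p b} = k)
    (hpts : ∀ p p' : P, p ≠ p' → Set.ncard {b : B | I p b ∧ I p' b} = l)
    (hblks : ∀ b b' : B, b ≠ b' → Set.ncard {p : P | I p b ∧ I p b'} = l)
    (A : Type*) [Group A] [Finite A] [MulAction A P] [MulAction A B]
    (hAauto : ∀ (a : A) (p : P) (b : B), I p b ↔ I (a • p) (a • b))
    [MulAction.IsPretransitive A P]
    (x : P) (L : B) :
    ∀ a : A, Set.ncard {c : A | IsConj a c ∧ c ∈ MulAction.stabilizer A x} =
      Set.ncard {c : A | IsConj a c ∧ c ∈ MulAction.stabilizer A L} := by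
  classical
  cases nonempty_fintype A
  have hv0 : 0 < v := lt_trans (Nat.lt_of_le_of_lt (Nat.zero_le _) hkl) hvk
  have hfix : ∀ a : A, Nat.card (fixedBy P a) = Nat.card (fixedBy B a) :=
    fun a => fix_card_eq I v k l hkl hvP hvB hpoint hpts hAauto a
  -- transitivity on blocks via Burnside
  have hPne : Nonempty P := by
    rw [← Fintype.card_pos_iff, ← Nat.card_eq_fintype_card, hvP]; exact hv0
  have hBne : Nonempty B := by
    rw [← Fintype.card_pos_iff, ← Nat.card_eq_fintype_card, hvB]; exact hv0
  letI : Fintype (orbitRel.Quotient A P) := Fintype.ofFinite _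
  letI : Fintype (orbitRel.Quotient A B) := Fintype.ofFinite _
  have hburnP := MulAction.sum_card_fixedBy_eq_card_orbits_mul_card_group A P
  have hburnB := MulAction.sum_card_fixedBy_eq_card_orbits_mul_card_group A B
  have hΩP : Fintype.card (orbitRel.Quotient A P) = 1 := by
    have hsub : Subsingleton (orbitRel.Quotient A P) :=
      (MulAction.pretransitive_iff_subsingleton_quotient A P).mp inferInstance
    have hne : Nonempty (orbitRel.Quotient A P) := ⟨Quotient.mk (orbitRel A P) (Classical.arbitrary P)⟩
    exact Nat.le_antisymm (Fintype.card_le_one_iff_subsingleton.mpr hsub) Fintype.card_pos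
  have hsums : (∑ a : A, Fintype.card (fixedBy P a)) = ∑ a : A, Fintype.card (fixedBy B a) := by
    apply Finset.sum_congr rfl
    intro a _
    have := hfix a
    rwa [Nat.card_eq_fintype_card, Nat.card_eq_fintype_card] at this
  have hΩB : Fintype.card (orbitRel.Quotient A B) = 1 := by
    have h1 : Fintype.card (orbitRel.Quotient A B) * Fintype.card A =
        Fintype.card (orbitRel.Quotient A P) * Fintype.card A := by
      rw [← hburnP, ← hburnB, hsums]
    have h2 := Nat.eq_of_mul_eq_mul_right Fintype.card_pos h1
    rw [h2, hΩP]
  haveI hBtrans : MulAction.IsPretransitive A B := by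
    rw [MulAction.pretransitive_iff_subsingleton_quotient]
    exact Fintype.card_le_one_iff_subsingleton.mp (le_of_eq hΩB)
  -- equal stabilizer cardinalities
  have hstab : Nat.card (stabilizer A x) = Nat.card (stabilizer A L) := by
    have h1 : (stabilizer A x).index * Nat.card (stabilizer A x) = Nat.card A :=
      Subgroup.index_mul_card _
    have h2 : (stabilizer A L).index * Nat.card (stabilizer A L) = Nat.card A :=
      Subgroup.index_mul_card _
    rw [MulAction.index_stabilizer_of_transitive, hvP] at h1
    rw [MulAction.index_stabilizer_of_transitive, hvB] at h2
    have := h1.trans h2.symm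
    exact Nat.eq_of_mul_eq_mul_left hv0 this
  intro a
  have h1 := conj_count P x a
  have h2 := conj_count B L a
  rw [hfix a, hstab] at h1
  have hcpos : 0 < Nat.card (Subgroup.centralizer ({a} : Set A)) := Nat.card_pos
  exact Nat.eq_of_mul_eq_mul_right hcpos (h1.trans h2.symm)
end

section
/- Let (G, U, V) be a Gassmann–Sunada triple where U and V are elementwise conjugate subgroups of the finite group G, and let T be a subgroup of the symmetric group S_n. Then the wreath products U ≀ T and V ≀ T are elementwise conjugate subgroups of G ≀ T. -/
/-- The action of a permutation of coordinates as a multiplicative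
automorphism of `Fin n → G`. -/
def permCoordAut {G : Type*} [Group G] {n : ℕ} :
    Equiv.Perm (Fin n) →* MulAut (Fin n → G) where
  toFun σ :=
    { Equiv.arrowCongr σ (Equiv.refl G) with
      map_mul' := fun f g => rfl }
  map_one' := by ext f x; simp [Equiv.arrowCongr] <;> rfl
  map_mul' := by intro σ τ; ext f x; rfl

/-- The wreath product `G ≀ T`, realized as the semidirect product
`(Fin n → G) ⋊ T` with `T ≤ Sₙ` permuting coordinates. -/
abbrev WreathProd (G : Type*) [Group G] {n : ℕ} (T : Subgroup (Equiv.Perm (Fin n))) :=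
  SemidirectProduct (Fin n → G) T (permCoordAut.comp T.subtype)

/-- The subgroup `U ≀ T = Uⁿ ⋊ T` of `G ≀ T`. -/
def wreathSub {G : Type*} [Group G] {n : ℕ} (T : Subgroup (Equiv.Perm (Fin n)))
    (U : Subgroup G) : Subgroup (WreathProd G T) where
  carrier := {w | ∀ i, w.left i ∈ U}
  one_mem' := by
    intro i
    simpa [SemidirectProduct.one_left] using U.one_mem
  mul_mem' := by
    intro a b ha hb i
    rw [SemidirectProduct.mul_left]
    exact U.mul_mem (ha i) (hb _)
  inv_mem' := by
    intro a ha i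
    rw [SemidirectProduct.inv_left]
    exact U.inv_mem (ha _)

theorem wreath_key {G : Type*} [Group G] {n : ℕ} (τ : Equiv.Perm (Fin n))
    (U V : Subgroup G) (hUV : ∀ g ∈ U, ∃ c : G, c * g * c⁻¹ ∈ V)
    (u : Fin n → G) (hu : ∀ i, u i ∈ U) :
    ∃ g : Fin n → G, ∀ i, g i * u i * (g (τ⁻¹ i))⁻¹ ∈ V := by
  classical
  set R : Fin n → Fin n := fun i =>
    (Finset.univ.filter (fun j => τ.SameCycle i j)).min'
      ⟨i, Finset.mem_filter.2 ⟨Finset.mem_univ _, Equiv.Perm.SameCycle.refl _ _⟩⟩ with hR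
  have hRsc : ∀ i, τ.SameCycle i (R i) := by
    intro i
    have := Finset.min'_mem (Finset.univ.filter (fun j => τ.SameCycle i j))
      ⟨i, Finset.mem_filter.2 ⟨Finset.mem_univ _, Equiv.Perm.SameCycle.refl _ _⟩⟩
    exact (Finset.mem_filter.1 this).2
  have hReq : ∀ i j, τ.SameCycle i j → R i = R j := by
    intro i j hij
    have hset : (Finset.univ.filter (fun x => τ.SameCycle i x))
        = (Finset.univ.filter (fun x => τ.SameCycle j x)) := by
      ext x
      simp only [Finset.mem_filter, Finset.mem_univ, true_and]
      exact ⟨fun h => hij.symm.trans h, fun h => hij.trans h⟩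
    simp only [hR]
    congr 1
  have hRinv : ∀ i, R (τ⁻¹ i) = R i :=
    fun i => (hReq i (τ⁻¹ i) ⟨-1, by simp⟩).symm
  have hpow : ∀ i, ∃ m : ℕ, (τ ^ m) (R i) = i := by
    intro i
    obtain ⟨m, _, hm⟩ := (hRsc i).symm.exists_pow_eq'
    exact ⟨m, hm⟩
  set k : Fin n → ℕ := fun i => Nat.find (hpow i) with hkdef
  have hk : ∀ i, (τ ^ k i) (R i) = i := fun i => Nat.find_spec (hpow i)
  set W : Fin n → ℕ → G := fun r m =>
    ((List.range m).map (fun j => (u ((τ ^ (j + 1)) r))⁻¹)).prod with hW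
  have hWmem : ∀ r m, W r m ∈ U := by
    intro r m
    refine Subgroup.list_prod_mem _ ?_
    intro x hx
    simp only [hW, List.mem_map] at hx
    obtain ⟨j, -, rfl⟩ := hx
    exact U.inv_mem (hu _)
  have hWsucc : ∀ r m, W r (m + 1) = W r m * (u ((τ ^ (m + 1)) r))⁻¹ := by
    intro r m
    simp [hW, List.range_succ]
  set F : Fin n → G := fun r => u r * (W r (k (τ⁻¹ r)))⁻¹ with hF
  have hFU : ∀ r, F r ∈ U := fun r => U.mul_mem (hu r) (U.inv_mem (hWmem _ _))
  have hc : ∀ r, ∃ c, c * F r * c⁻¹ ∈ V := fun r => hUV _ (hFU r)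
  choose c hcV using hc
  refine ⟨fun i => c (R i) * W (R i) (k i), fun i => ?_⟩
  simp only
  rw [hRinv i]
  rcases Nat.eq_zero_or_pos (k i) with h0 | hposk
  · have hri : R i = i := by have := hk i; rw [h0] at this; simpa using this
    have : c (R i) * W (R i) (k i) * u i * (c (R i) * W (R i) (k (τ⁻¹ i)))⁻¹
        = c (R i) * F (R i) * (c (R i))⁻¹ := by
      rw [h0, hF]
      simp only [hri]
      have hW0 : W i 0 = 1 := by simp [hW]
      rw [hW0]
      group
    rw [this]
    exact hcV (R i)
  · obtain ⟨m, hm⟩ := Nat.exists_eq_add_of_lt hposk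
    rw [Nat.zero_add] at hm
    have hkm : k (τ⁻¹ i) = m := by
      have h1 : (τ ^ m) (R (τ⁻¹ i)) = τ⁻¹ i := by
        rw [hRinv i]
        apply Equiv.injective τ
        rw [(show τ (τ⁻¹ i) = i from τ.apply_symm_apply i), ← Equiv.Perm.mul_apply, ← pow_succ']
        rw [← hm]; exact hk i
      have hle : k (τ⁻¹ i) ≤ m := Nat.find_min' (hpow (τ⁻¹ i)) h1
      rcases Nat.lt_or_ge (k (τ⁻¹ i)) m with hlt | hge
      · exfalso
        have h2 : (τ ^ (k (τ⁻¹ i) + 1)) (R i) = i := by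
          have h3 := hk (τ⁻¹ i)
          rw [hRinv i] at h3
          rw [pow_succ', Equiv.Perm.mul_apply, h3, (show τ (τ⁻¹ i) = i from τ.apply_symm_apply i)]
        have := Nat.find_min (hpow i) (by omega : k (τ⁻¹ i) + 1 < k i) h2
        exact this
      · omega
    have hui : (τ ^ (m + 1)) (R i) = i := by rw [← hm]; exact hk i
    have : c (R i) * W (R i) (k i) * u i * (c (R i) * W (R i) (k (τ⁻¹ i)))⁻¹ = 1 := by
      rw [hm, hkm, hWsucc, hui]
      group
    rw [this]
    exact V.one_mem


theorem wreath_oneDir {G : Type*} [Group G] {n : ℕ}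
    (T : Subgroup (Equiv.Perm (Fin n))) (U V : Subgroup G)
    (hUV : ∀ g ∈ U, ∃ c : G, c * g * c⁻¹ ∈ V) (w : WreathProd G T)
    (h : ∃ h ∈ wreathSub T U, IsConj w h) : ∃ h ∈ wreathSub T V, IsConj w h := by
  obtain ⟨h, hh, hcj⟩ := h
  obtain ⟨g, hg⟩ := wreath_key (↑h.right) U V hUV h.left hh
  set x : WreathProd G T := ⟨g, 1⟩ with hx
  refine ⟨x * h * x⁻¹, ?_, hcj.trans (isConj_iff.mpr ⟨x, rfl⟩)⟩
  intro i
  have hleft : (x * h * x⁻¹).left i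
      = g i * h.left i * (g ((↑h.right : Equiv.Perm (Fin n))⁻¹ i))⁻¹ := by
    simp only [hx, SemidirectProduct.mul_left, SemidirectProduct.inv_left,
      SemidirectProduct.mul_right, SemidirectProduct.inv_right]
    simp [permCoordAut, Equiv.arrowCongr, Equiv.Perm.inv_def, mul_assoc]
    rfl
  rw [hleft]
  exact hg i

/-- If `U` and `V` are elementwise conjugate subgroups of a finite group `G`
and `T ≤ Sₙ`, then `U ≀ T` and `V ≀ T` are elementwise conjugate in `G ≀ T`. -/
theorem wreath_elementwise_conjugate {G : Type*} [Group G] [Finite G] {n : ℕ}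
    (T : Subgroup (Equiv.Perm (Fin n))) (U V : Subgroup G)
    (hEC : ∀ g : G, (∃ h ∈ U, IsConj g h) ↔ (∃ h ∈ V, IsConj g h)) :
    ∀ w : WreathProd G T,
      (∃ h ∈ wreathSub T U, IsConj w h) ↔ (∃ h ∈ wreathSub T V, IsConj w h) := by
  have hUV : ∀ g ∈ U, ∃ c : G, c * g * c⁻¹ ∈ V := by
    intro g hg
    obtain ⟨h, hhV, hcj⟩ := (hEC g).1 ⟨g, hg, IsConj.refl g⟩
    obtain ⟨c, hc⟩ := isConj_iff.1 hcj
    exact ⟨c, hc ▸ hhV⟩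
  have hVU : ∀ g ∈ V, ∃ c : G, c * g * c⁻¹ ∈ U := by
    intro g hg
    obtain ⟨h, hhU, hcj⟩ := (hEC g).2 ⟨g, hg, IsConj.refl g⟩
    obtain ⟨c, hc⟩ := isConj_iff.1 hcj
    exact ⟨c, hc ▸ hhU⟩
  exact fun w => ⟨wreath_oneDir T U V hUV w, wreath_oneDir T V U hVU w⟩
end

section
/- In the alternating group A_n for n ≥ 5, let α and β be two distinct commuting involutions each of which is a product of two disjoint transpositions with αβ also of this form. Then H = {id, α} and H' = {id, α, β, αβ} are elementwise conjugate subgroups of A_n of different orders. -/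
open Equiv Equiv.Perm

/-- In a group, the closure of two commuting involutions consists of at most
`{1, α, β, α * β}`. -/
lemma aux_klein_mem {G : Type*} [Group G] {α β : G} (hcomm : α * β = β * α)
    (hα2 : α ^ 2 = 1) (hβ2 : β ^ 2 = 1) :
    ∀ x ∈ Subgroup.closure ({α, β} : Set G), x = 1 ∨ x = α ∨ x = β ∨ x = α * β := by
  have hαα : α * α = 1 := by rw [← pow_two]; exact hα2
  have hββ : β * β = 1 := by rw [← pow_two]; exact hβ2
  have hβα : β * α = α * β := hcomm.symm
  intro x hx
  induction hx using Subgroup.closure_induction with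
  | mem y hy =>
    rcases hy with hy | hy
    · exact Or.inr (Or.inl hy)
    · exact Or.inr (Or.inr (Or.inl hy))
  | one => exact Or.inl rfl
  | mul y z _ _ ihy ihz =>
    rcases ihy with hy | hy | hy | hy <;> rcases ihz with hz | hz | hz | hz <;> rw [hy, hz]
    · exact Or.inl (one_mul 1)
    · exact Or.inr (Or.inl (one_mul α))
    · exact Or.inr (Or.inr (Or.inl (one_mul β)))
    · exact Or.inr (Or.inr (Or.inr (one_mul (α * β))))
    · exact Or.inr (Or.inl (mul_one α))
    · exact Or.inl hαα
    · exact Or.inr (Or.inr (Or.inr rfl))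
    · exact Or.inr (Or.inr (Or.inl (by rw [← mul_assoc, hαα, one_mul])))
    · exact Or.inr (Or.inr (Or.inl (mul_one β)))
    · exact Or.inr (Or.inr (Or.inr hβα))
    · exact Or.inl hββ
    · exact Or.inr (Or.inl (by rw [← mul_assoc, hβα, mul_assoc, hββ, mul_one]))
    · exact Or.inr (Or.inr (Or.inr (mul_one (α * β))))
    · exact Or.inr (Or.inr (Or.inl (by rw [mul_assoc, hβα, ← mul_assoc, hαα, one_mul])))
    · exact Or.inr (Or.inl (by rw [mul_assoc, hββ, mul_one]))
    · exact Or.inl (by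
        rw [mul_assoc, ← mul_assoc β α β, hβα, mul_assoc α β β, hββ, mul_one, hαα])
  | inv y _ ihy =>
    rcases ihy with hy | hy | hy | hy <;> rw [hy]
    · exact Or.inl inv_one
    · exact Or.inr (Or.inl (inv_eq_of_mul_eq_one_right hαα))
    · exact Or.inr (Or.inr (Or.inl (inv_eq_of_mul_eq_one_right hββ)))
    · refine Or.inr (Or.inr (Or.inr (inv_eq_of_mul_eq_one_right ?_)))
      rw [mul_assoc, ← mul_assoc β α β, hβα, mul_assoc α β β, hββ, mul_one, hαα]

/-- Elements of cycle type `{2,2}` that are conjugate in `Perm` are conjugate in the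
alternating group. -/
lemma aux_isConj_alt {n : ℕ} (σ τ : alternatingGroup (Fin n))
    (hσ : (σ : Perm (Fin n)).cycleType = {2, 2})
    (hc : IsConj (σ : Perm (Fin n)) (τ : Perm (Fin n))) : IsConj σ τ := by
  obtain ⟨π, hπ⟩ := isConj_iff.1 hc
  rcases Int.units_eq_one_or (Perm.sign π) with h | h
  · exact isConj_iff.2 ⟨⟨π, Perm.mem_alternatingGroup.mpr h⟩, Subtype.ext (by
      simpa using hπ)⟩
  · have hne : (σ : Perm (Fin n)).cycleFactorsFinset.Nonempty := by
      rw [Finset.nonempty_iff_ne_empty]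
      intro h0
      have : (σ : Perm (Fin n)).cycleType = 0 := by
        rw [cycleType_def, h0]; rfl
      rw [hσ] at this; simp at this
    obtain ⟨c, hcmem⟩ := hne
    have hcard : c.support.card ∈ (σ : Perm (Fin n)).cycleType := by
      rw [cycleType_def]
      exact Multiset.mem_map.2 ⟨c, hcmem, rfl⟩
    rw [hσ] at hcard
    have hcard2 : c.support.card = 2 := by
      rcases Multiset.mem_cons.1 hcard with h' | h'
      · exact h'
      · simpa using h'
    have hcyc : c.IsCycle := (Perm.mem_cycleFactorsFinset_iff.1 hcmem).1
    have hsignc : Perm.sign c = -1 := by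
      rw [hcyc.sign, hcard2]; norm_num
    have hcom : Commute c (σ : Perm (Fin n)) := self_mem_cycle_factors_commute hcmem
    refine isConj_iff.2 ⟨⟨π * c, ?_⟩, Subtype.ext ?_⟩
    · rw [Perm.mem_alternatingGroup, map_mul, h, hsignc]; norm_num
    · have key : (π * c) * (σ : Perm (Fin n)) * (π * c)⁻¹ = π * (σ : Perm (Fin n)) * π⁻¹ := by
        rw [mul_inv_rev]
        calc π * c * σ * (c⁻¹ * π⁻¹) = π * (c * σ * c⁻¹) * π⁻¹ := by group
        _ = π * (σ : Perm (Fin n)) * π⁻¹ := by rw [hcom.eq]; group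
      show (↑(⟨π * c, _⟩ * σ * (⟨π * c, _⟩)⁻¹ : alternatingGroup (Fin n)) : Perm (Fin n)) = τ
      simp only [Subgroup.coe_mul, InvMemClass.coe_inv]
      rw [key, hπ]

/-- In `A_n` (`n ≥ 5`), if `α ≠ β` are commuting involutions, each a product of
two disjoint transpositions (cycle type `{2,2}`) and `αβ` also of this form,
then `H = ⟨α⟩ = {id, α}` and `H' = ⟨α, β⟩ = {id, α, β, αβ}` are elementwise
conjugate subgroups of `A_n` of different orders (`2` and `4`). -/
theorem alternating_elementwise_conjugate_diff_orders {n : ℕ} (hn : 5 ≤ n)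
    (α β : alternatingGroup (Fin n))
    (hne : α ≠ β) (hcomm : α * β = β * α)
    (hα1 : α ≠ 1) (hβ1 : β ≠ 1) (hα2 : α ^ 2 = 1) (hβ2 : β ^ 2 = 1)
    (hαt : (α : Equiv.Perm (Fin n)).cycleType = {2, 2})
    (hβt : (β : Equiv.Perm (Fin n)).cycleType = {2, 2})
    (hαβt : ((α * β : alternatingGroup (Fin n)) : Equiv.Perm (Fin n)).cycleType = {2, 2}) :
    (∀ g : alternatingGroup (Fin n),
        (∃ h ∈ Subgroup.zpowers α, IsConj g h) ↔
          (∃ h ∈ Subgroup.closure {α, β}, IsConj g h)) ∧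
      Nat.card (Subgroup.zpowers α) = 2 ∧
      Nat.card (Subgroup.closure ({α, β} : Set (alternatingGroup (Fin n)))) = 4 := by
  have hαα : α * α = 1 := by rw [← pow_two]; exact hα2
  have hαβ1 : α * β ≠ 1 := fun h =>
    hne (mul_left_cancel (hαα.trans h.symm))
  have hββα : β ≠ α * β := fun h =>
    hα1 (mul_right_cancel ((one_mul β).trans h)).symm
  have hααβ : α ≠ α * β := fun h =>
    hβ1 (mul_left_cancel ((mul_one α).trans h)).symm
  have hβα : IsConj β α :=
    aux_isConj_alt β α hβt (isConj_iff_cycleType_eq.2 (hβt.trans hαt.symm))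
  have hαβα : IsConj (α * β) α :=
    aux_isConj_alt (α * β) α hαβt (isConj_iff_cycleType_eq.2 (hαβt.trans hαt.symm))
  have hmem := aux_klein_mem hcomm hα2 hβ2
  refine ⟨?_, ?_, ?_⟩
  · intro g
    constructor
    · rintro ⟨h, hh, hconj⟩
      exact ⟨h, Subgroup.zpowers_le.2 (Subgroup.subset_closure (Set.mem_insert _ _)) hh, hconj⟩
    · rintro ⟨h, hh, hconj⟩
      rcases hmem h hh with h' | h' | h' | h'
      · exact ⟨1, one_mem _, h' ▸ hconj⟩
      · exact ⟨α, Subgroup.mem_zpowers α, h' ▸ hconj⟩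
      · exact ⟨α, Subgroup.mem_zpowers α, (h' ▸ hconj : IsConj g β).trans hβα⟩
      · exact ⟨α, Subgroup.mem_zpowers α, (h' ▸ hconj : IsConj g (α * β)).trans hαβα⟩
  · rw [Nat.card_zpowers]
    haveI : Fact (Nat.Prime 2) := ⟨Nat.prime_two⟩
    exact orderOf_eq_prime hα2 hα1
  · have hset : (Subgroup.closure ({α, β} : Set (alternatingGroup (Fin n))) :
        Set (alternatingGroup (Fin n))) = {1, α, β, α * β} := by
      apply Set.Subset.antisymm
      · intro h hh
        rcases hmem h hh with h' | h' | h' | h' <;> simp [h']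
      · intro h hh
        have h1 : α ∈ Subgroup.closure ({α, β} : Set (alternatingGroup (Fin n))) :=
          Subgroup.subset_closure (Set.mem_insert _ _)
        have h2 : β ∈ Subgroup.closure ({α, β} : Set (alternatingGroup (Fin n))) :=
          Subgroup.subset_closure (Set.mem_insert_of_mem _ rfl)
        rcases hh with h' | h' | h' | h'
        · exact h' ▸ one_mem _
        · exact h' ▸ h1
        · exact h' ▸ h2
        · exact h' ▸ mul_mem h1 h2
    have hcards : Nat.card (Subgroup.closure ({α, β} : Set (alternatingGroup (Fin n)))) =
        Nat.card ({1, α, β, α * β} : Set (alternatingGroup (Fin n))) := by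
      rw [← hset]; rfl
    rw [hcards, Nat.card_coe_set_eq]
    rw [Set.ncard_insert_of_notMem (by simp [Ne.symm hα1, Ne.symm hβ1, Ne.symm hαβ1])
        (Set.toFinite _),
      Set.ncard_insert_of_notMem (by simp [hne, hααβ]) (Set.toFinite _),
      Set.ncard_insert_of_notMem (by simp [hββα]) (Set.toFinite _),
      Set.ncard_singleton]
end

section
/- Let (G, U, V) be a triple with U, V ≤ G almost conjugate, and let N be a normal subgroup of G contained in U ∩ V. Then U/N and V/N are almost conjugate subgroups of G/N. -/
private lemma mem_map_mk'_iff' {G : Type*} [Group G] (U N : Subgroup G) [N.Normal]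
    (hNU : N ≤ U) (x : G) :
    (x : G ⧸ N) ∈ U.map (QuotientGroup.mk' N) ↔ x ∈ U := by
  constructor
  · rintro ⟨y, hy, h⟩
    have h2 : y⁻¹ * x ∈ N := QuotientGroup.eq.mp h
    have := U.mul_mem hy (hNU h2)
    simpa using this
  · intro h; exact ⟨x, h, rfl⟩

private lemma card_preimage_eq' {G : Type*} [Group G] [Finite G] (U N : Subgroup G)
    [N.Normal] (hNU : N ≤ U) (q : G ⧸ N) :
    Set.ncard {x : G | IsConj q (x : G ⧸ N) ∧ x ∈ U} =
      Nat.card N * Set.ncard {x : G ⧸ N | IsConj q x ∧ x ∈ U.map (QuotientGroup.mk' N)} := by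
  have hpre : (QuotientGroup.mk ⁻¹' {x : G ⧸ N | IsConj q x ∧ x ∈ U.map (QuotientGroup.mk' N)})
      = {x : G | IsConj q (x : G ⧸ N) ∧ x ∈ U} := by
    ext x
    simp only [Set.mem_preimage, Set.mem_setOf_eq]
    exact and_congr Iff.rfl (mem_map_mk'_iff' U N hNU x)
  rw [← hpre, ← Nat.card_coe_set_eq, ← Nat.card_coe_set_eq,
    Nat.card_congr (QuotientGroup.preimageMkEquivSubgroupProdSet N _), Nat.card_prod]

private lemma card_A_eq' {G : Type*} [Group G] [Finite G] (U V N : Subgroup G) [N.Normal]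
    (hAC : ∀ g : G, Set.ncard {x : G | IsConj g x ∧ x ∈ U} =
      Set.ncard {x : G | IsConj g x ∧ x ∈ V}) (q : G ⧸ N) :
    Set.ncard {x : G | IsConj q (x : G ⧸ N) ∧ x ∈ U} =
      Set.ncard {x : G | IsConj q (x : G ⧸ N) ∧ x ∈ V} := by
  classical
  have : Fintype G := Fintype.ofFinite G
  rw [Set.ncard_eq_toFinset_card', Set.ncard_eq_toFinset_card']
  rw [Finset.card_eq_sum_card_fiberwise
    (f := fun x : G => ConjClasses.mk x) (t := Finset.univ) (fun x _ => Finset.mem_univ _),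
    Finset.card_eq_sum_card_fiberwise
    (f := fun x : G => ConjClasses.mk x) (t := Finset.univ) (fun x _ => Finset.mem_univ _)]
  refine Finset.sum_congr rfl (fun c _ => ?_)
  set g := Quotient.out c with hg
  have hcg : ConjClasses.mk g = c := Quotient.out_eq c
  by_cases hq : IsConj q ((g : G) : G ⧸ N)
  · have key : ∀ (W : Subgroup G),
        (Set.toFinset {x : G | IsConj q (x : G ⧸ N) ∧ x ∈ W}).filter
          (fun x => ConjClasses.mk x = c)
        = Set.toFinset {x : G | IsConj g x ∧ x ∈ W} := by
      intro W
      ext x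
      simp only [Finset.mem_filter, Set.mem_toFinset, Set.mem_setOf_eq]
      constructor
      · rintro ⟨⟨h1, h2⟩, h3⟩
        rw [← hcg, ConjClasses.mk_eq_mk_iff_isConj] at h3
        exact ⟨h3.symm, h2⟩
      · rintro ⟨h1, h2⟩
        have hmap : IsConj ((g : G) : G ⧸ N) ((x : G) : G ⧸ N) :=
          (QuotientGroup.mk' N).map_isConj h1
        exact ⟨⟨hq.trans hmap, h2⟩, by rw [← hcg, ConjClasses.mk_eq_mk_iff_isConj]; exact h1.symm⟩
    rw [key U, key V, ← Set.ncard_eq_toFinset_card', ← Set.ncard_eq_toFinset_card']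
    exact hAC g
  · have key : ∀ (W : Subgroup G),
        (Set.toFinset {x : G | IsConj q (x : G ⧸ N) ∧ x ∈ W}).filter
          (fun x => ConjClasses.mk x = c) = ∅ := by
      intro W
      ext x
      simp only [Finset.mem_filter, Set.mem_toFinset, Set.mem_setOf_eq, Finset.notMem_empty,
        iff_false]
      rintro ⟨⟨h1, h2⟩, h3⟩
      rw [← hcg, ConjClasses.mk_eq_mk_iff_isConj] at h3
      exact hq (h1.trans ((QuotientGroup.mk' N).map_isConj h3))
    rw [key U, key V]

/-- If `U` and `V` are almost conjugate subgroups of the finite group `G` and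
`N ⊴ G` with `N ≤ U ⊓ V`, then `U/N` and `V/N` are almost conjugate in `G/N`. -/
theorem almostConjugate_quotient {G : Type*} [Group G] [Finite G]
    (U V N : Subgroup G) [N.Normal] (hN : N ≤ U ⊓ V)
    (hAC : ∀ g : G, Set.ncard {x : G | IsConj g x ∧ x ∈ U} =
      Set.ncard {x : G | IsConj g x ∧ x ∈ V}) :
    ∀ q : G ⧸ N,
      Set.ncard {x : G ⧸ N | IsConj q x ∧ x ∈ U.map (QuotientGroup.mk' N)} =
        Set.ncard {x : G ⧸ N | IsConj q x ∧ x ∈ V.map (QuotientGroup.mk' N)} := by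
  intro q
  have hU := card_preimage_eq' U N (le_trans hN inf_le_left) q
  have hV := card_preimage_eq' V N (le_trans hN inf_le_right) q
  have hA := card_A_eq' U V N hAC q
  have hNpos : 0 < Nat.card N := Nat.card_pos
  exact Nat.eq_of_mul_eq_mul_left hNpos (by rw [← hU, ← hV, hA])
end
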